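/- For every T > 0 and all bounded measurable symmetric functions φ, ψ on [0,T]², one has |⟨φ,ψ⟩_{H^{⊗2}} − ⟨φ,ψ⟩_{H₁^{⊗2}}| ≤ ⟨φ,ψ⟩_{H₂^{⊗2}} + 2 C'_β |⟨Kφ, Kψ⟩_{H₁}|. -/

import Mathlib

/-!
Write `D = C_β k + E` with `k(t, s) = |t - s| ^ (2β - 2)` and `|E(t, s)| ≤ C'_β (t s) ^ (β - 1)` off
the diagonal. Pointwise, `D ⊗ D - C_β² k ⊗ k = E ⊗ E + C_β k ⊗ E + C_β E ⊗ k`. Against `φ ⊗ ψ`, the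
first term is bounded by the `H₂` term; the two mixed terms have the same integral, because
exchanging the pairs `(t₁, t₂)` and `(s₁, s₂)` fixes `φ(t₁, s₁) ψ(t₂, s₂)` by symmetry of `φ` and
`ψ`; and integrating out `(s₁, s₂)` factorises the mixed term into `⟨Kφ, Kψ⟩_{H₁}`. Every integrand
is a bounded function times a tensor product of `k`, `(t s) ^ (β - 1)` or `D`, all integrable on
`(0, T]²` since `2β - 2 > -1`.
-/

open MeasureTheory Set

theorem abs_mul_sub_mul_le_of_abs_sub_le {a b c d e f : ℝ} (hac : |a - c| ≤ e) (hbd : |b - d| ≤ f) :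
    |a * b - c * d| ≤ e * f + |c| * f + e * |d| := by
  have he : 0 ≤ e := (abs_nonneg _).trans hac
  calc |a * b - c * d| = |(a - c) * (b - d) + c * (b - d) + (a - c) * d| := by ring_nf
    _ ≤ |a - c| * |b - d| + |c| * |b - d| + |a - c| * |d| := by
      simpa only [abs_mul] using abs_add_three ((a - c) * (b - d)) (c * (b - d)) ((a - c) * d)
    _ ≤ e * f + |c| * f + e * |d| := by gcongr

theorem MeasureTheory.Measure.ae_prod_ne {α : Type*} [MeasurableSpace α] [MeasurableEq α]
    (μ ν : Measure α) [SFinite ν] [NullSingletonClass ν] : ∀ᵐ p ∂μ.prod ν, p.1 ≠ p.2 :=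
  (Measure.ae_prod_iff_ae_ae measurableSet_diagonal.compl).2 <|
    ae_of_all _ fun x => (ν.ae_ne x).mono fun _ h => h.symm

theorem MeasureTheory.Measure.ae_prod_of_ae {α β : Type*} [MeasurableSpace α]
    [MeasurableSpace β] {μ : Measure α} {ν : Measure β} [SFinite ν] {p : α → Prop} {q : β → Prop}
    (hp : ∀ᵐ x ∂μ, p x) (hq : ∀ᵐ y ∂ν, q y) : ∀ᵐ z ∂μ.prod ν, p z.1 ∧ q z.2 :=
  (quasiMeasurePreserving_fst.ae hp).and (quasiMeasurePreserving_snd.ae hq)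

theorem MeasureTheory.integrable_of_abs_sub_le {α : Type*} [MeasurableSpace α] {μ : Measure α}
    {f g h : α → ℝ} (hf : AEStronglyMeasurable f μ) (hg : Integrable g μ) (hh : Integrable h μ)
    (hfg : ∀ᵐ x ∂μ, |f x - g x| ≤ h x) : Integrable f μ := by
  simpa using hg.add (hh.mono' (hf.sub hg.aestronglyMeasurable) hfg)

section Rearrange

variable {α β γ δ : Type*} [MeasurableSpace α] [MeasurableSpace β] [MeasurableSpace γ]
  [MeasurableSpace δ]

def MeasurableEquiv.prodProdProdComm : (α × β) × γ × δ ≃ᵐ (α × γ) × β × δ where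
  toEquiv := Equiv.prodProdProdComm α β γ δ
  measurable_toFun := by dsimp [Equiv.prodProdProdComm]; fun_prop
  measurable_invFun := by dsimp [Equiv.prodProdProdComm]; fun_prop

variable {μ₁ : Measure α} {μ₂ : Measure β} {μ₃ : Measure γ} {μ₄ : Measure δ}
  [SFinite μ₁] [SFinite μ₂] [SFinite μ₃] [SFinite μ₄]

theorem measurePreserving_prodProdProdComm :
    MeasurePreserving MeasurableEquiv.prodProdProdComm
      ((μ₁.prod μ₂).prod (μ₃.prod μ₄)) ((μ₁.prod μ₃).prod (μ₂.prod μ₄)) := by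
  have inner : MeasurePreserving (fun p : β × γ × δ => (p.2.1, p.1, p.2.2))
      (μ₂.prod (μ₃.prod μ₄)) (μ₃.prod (μ₂.prod μ₄)) :=
    ((measurePreserving_prodAssoc μ₃ μ₂ μ₄).comp
      ((Measure.measurePreserving_swap.prod (MeasurePreserving.id μ₄)).comp
        (measurePreserving_prodAssoc μ₂ μ₃ μ₄).symm))
  exact ((measurePreserving_prodAssoc μ₁ μ₃ (μ₂.prod μ₄)).symm.comp
    ((MeasurePreserving.id μ₁).prod inner)).comp (measurePreserving_prodAssoc μ₁ μ₂ (μ₃.prod μ₄))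

theorem integral_prod_prod {E : Type*} [NormedAddCommGroup E] [NormedSpace ℝ E]
    {F : (α × β) × γ × δ → E} (hF : Integrable F ((μ₁.prod μ₂).prod (μ₃.prod μ₄))) :
    ∫ z, F z ∂(μ₁.prod μ₂).prod (μ₃.prod μ₄)
      = ∫ x₁, ∫ x₂, ∫ x₃, ∫ x₄, F ((x₁, x₂), (x₃, x₄)) ∂μ₄ ∂μ₃ ∂μ₂ ∂μ₁ := by
  have inner : ∀ᵐ p ∂μ₁.prod μ₂,
      ∫ q, F (p, q) ∂μ₃.prod μ₄ = ∫ x₃, ∫ x₄, F (p, (x₃, x₄)) ∂μ₄ ∂μ₃ :=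
    hF.prod_right_ae.mono fun p hp => integral_prod _ hp
  rw [integral_prod F hF, integral_congr_ae inner,
    integral_prod _ (hF.integral_prod_left.congr inner)]

theorem integral_integral_integral_integral_eq {E : Type*} [NormedAddCommGroup E]
    [NormedSpace ℝ E] {F : α → β → γ → δ → E}
    (hF : Integrable (fun p => F p.1.1 p.2.1 p.1.2 p.2.2) ((μ₁.prod μ₃).prod (μ₂.prod μ₄))) :
    ∫ x₁, ∫ x₂, ∫ x₃, ∫ x₄, F x₁ x₂ x₃ x₄ ∂μ₄ ∂μ₃ ∂μ₂ ∂μ₁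
      = ∫ p, F p.1.1 p.2.1 p.1.2 p.2.2 ∂(μ₁.prod μ₃).prod (μ₂.prod μ₄) := by
  have e := measurePreserving_prodProdProdComm (μ₁ := μ₁) (μ₂ := μ₂) (μ₃ := μ₃) (μ₄ := μ₄)
  rw [← e.integral_comp']
  exact (integral_prod_prod (e.integrable_comp_of_integrable hF)).symm

theorem integral_mul_mul_prod_eq_integral_integral {f : α → γ → ℝ} {g : β → δ → ℝ}
    {k : α × β → ℝ}
    (h : Integrable (fun p => f p.1.1 p.2.1 * g p.1.2 p.2.2 * k p.1)
      ((μ₁.prod μ₂).prod (μ₃.prod μ₄))) :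
    ∫ p, f p.1.1 p.2.1 * g p.1.2 p.2.2 * k p.1 ∂(μ₁.prod μ₂).prod (μ₃.prod μ₄)
      = ∫ x₁, ∫ x₂, (∫ y, f x₁ y ∂μ₃) * (∫ y, g x₂ y ∂μ₄) * k (x₁, x₂) ∂μ₂ ∂μ₁ := by
  have inner : ∀ x : α × β, ∫ y, f x.1 y.1 * g x.2 y.2 * k x ∂μ₃.prod μ₄
      = (∫ y, f x.1 y ∂μ₃) * (∫ y, g x.2 y ∂μ₄) * k x := by
    intro x
    rw [integral_mul_const, integral_prod_mul]
  rw [integral_prod _ h]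
  simp only [inner]
  refine integral_prod (fun x : α × β => (∫ y, f x.1 y ∂μ₃) * (∫ y, g x.2 y ∂μ₄) * k x) ?_
  simpa only [inner] using h.integral_prod_left

end Rearrange

section Tensor

variable {X : Type*} [MeasurableSpace X] {ν : Measure X}

theorem MeasureTheory.Integrable.bdd_mul_mul_prod {Φ : X × X → ℝ} {f g : X → ℝ} {M : ℝ}
    (hf : Integrable f ν) (hg : Integrable g ν) (hΦ : AEStronglyMeasurable Φ (ν.prod ν))
    (hΦM : ∀ᵐ p ∂ν.prod ν, |Φ p| ≤ M) :
    Integrable (fun p => Φ p * f p.1 * g p.2) (ν.prod ν) := by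
  simpa only [mul_assoc] using (hf.mul_prod hg).bdd_mul hΦ hΦM

theorem MeasureTheory.Integrable.bdd_abs_mul_mul_prod {Φ : X × X → ℝ} {f g : X → ℝ} {M : ℝ}
    (hf : Integrable f ν) (hg : Integrable g ν) (hΦ : AEStronglyMeasurable Φ (ν.prod ν))
    (hΦM : ∀ᵐ p ∂ν.prod ν, |Φ p| ≤ M) :
    Integrable (fun p => |Φ p| * f p.1 * g p.2) (ν.prod ν) :=
  hf.bdd_mul_mul_prod hg hΦ.norm (hΦM.mono fun p hp => (abs_abs (Φ p)).le.trans hp)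

variable [SFinite ν]

theorem abs_integral_mul_mul_prod_sub_le {Φ : X × X → ℝ} {Dk K P : X → ℝ} {c c' M : ℝ}
    (hΦ : AEStronglyMeasurable Φ (ν.prod ν)) (hΦM : ∀ᵐ p ∂ν.prod ν, |Φ p| ≤ M)
    (hΦsymm : ∀ x y, Φ (x, y) = Φ (y, x)) (hDk : Integrable Dk ν) (hK : Integrable K ν)
    (hP : Integrable P ν) (hK0 : ∀ x, 0 ≤ K x) (hc : 0 ≤ c)
    (hDkK : ∀ᵐ x ∂ν, |Dk x - c * K x| ≤ c' * P x) :
    |∫ p, Φ p * Dk p.1 * Dk p.2 ∂ν.prod ν - c ^ 2 * ∫ p, Φ p * K p.1 * K p.2 ∂ν.prod ν|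
      ≤ c' ^ 2 * ∫ p, |Φ p| * P p.1 * P p.2 ∂ν.prod ν
        + 2 * c' * (c * ∫ p, |Φ p| * K p.1 * P p.2 ∂ν.prod ν) := by
  have hDD := hDk.bdd_mul_mul_prod hDk hΦ hΦM
  have hKK := hK.bdd_mul_mul_prod hK hΦ hΦM
  have hPP := hP.bdd_abs_mul_mul_prod hP hΦ hΦM
  have hKP := hK.bdd_abs_mul_mul_prod hP hΦ hΦM
  have hPK := hP.bdd_abs_mul_mul_prod hK hΦ hΦM
  have hswap : ∫ p, |Φ p| * P p.1 * K p.2 ∂ν.prod ν = ∫ p, |Φ p| * K p.1 * P p.2 ∂ν.prod ν := by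
    rw [← integral_prod_swap]
    refine integral_congr_ae (ae_of_all _ fun p => ?_)
    simp only [Prod.swap, hΦsymm p.2 p.1]
    ring
  have pointwise : ∀ᵐ p ∂ν.prod ν,
      ‖Φ p * Dk p.1 * Dk p.2 - c ^ 2 * (Φ p * K p.1 * K p.2)‖
        ≤ c' ^ 2 * (|Φ p| * P p.1 * P p.2) + c' * c * (|Φ p| * K p.1 * P p.2)
          + c' * c * (|Φ p| * P p.1 * K p.2) := by
    filter_upwards [Measure.quasiMeasurePreserving_fst.ae hDkK,
      Measure.quasiMeasurePreserving_snd.ae hDkK] with p h₁ h₂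
    have key := abs_mul_sub_mul_le_of_abs_sub_le h₁ h₂
    rw [abs_of_nonneg (mul_nonneg hc (hK0 _)), abs_of_nonneg (mul_nonneg hc (hK0 _))] at key
    calc ‖Φ p * Dk p.1 * Dk p.2 - c ^ 2 * (Φ p * K p.1 * K p.2)‖
        = |Φ p| * |Dk p.1 * Dk p.2 - c * K p.1 * (c * K p.2)| := by
          rw [Real.norm_eq_abs, ← abs_mul]; ring_nf
      _ ≤ |Φ p| * (c' * P p.1 * (c' * P p.2) + c * K p.1 * (c' * P p.2)
            + c' * P p.1 * (c * K p.2)) := by gcongr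
      _ = _ := by ring
  rw [← integral_const_mul, ← integral_sub hDD (hKK.const_mul _)]
  calc _ ≤ ∫ p, c' ^ 2 * (|Φ p| * P p.1 * P p.2) + c' * c * (|Φ p| * K p.1 * P p.2)
          + c' * c * (|Φ p| * P p.1 * K p.2) ∂ν.prod ν :=
        norm_integral_le_of_norm_le
          (((hPP.const_mul _).add (hKP.const_mul _)).add (hPK.const_mul _)) pointwise
    _ = _ := by
      rw [integral_add, integral_add, integral_const_mul, integral_const_mul, integral_const_mul,
        hswap]
      · ring
      exacts [hPP.const_mul _, hKP.const_mul _, (hPP.const_mul _).add (hKP.const_mul _),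
        hPK.const_mul _]

end Tensor

theorem intervalIntegrable_abs_rpow {r : ℝ} (hr : -1 < r) (a b : ℝ) :
    IntervalIntegrable (fun x => |x| ^ r) volume a b := by
  have nonneg : ∀ c, 0 ≤ c → IntervalIntegrable (fun x => |x| ^ r) volume 0 c := fun c hc =>
    (intervalIntegral.intervalIntegrable_rpow' hr).congr fun x hx => by
      rw [uIoc_of_le hc] at hx
      simp only [abs_of_pos hx.1]
  have from_zero : ∀ c, IntervalIntegrable (fun x => |x| ^ r) volume 0 c := fun c => by
    rcases le_total 0 c with hc | hc
    · exact nonneg c hc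
    · simpa using (nonneg (-c) (neg_nonneg.2 hc)).comp_sub_left 0
  exact (from_zero a).symm.trans (from_zero b)

theorem integrable_abs_sub_rpow_prod {r : ℝ} (hr : -1 < r) (a b : ℝ) :
    Integrable (fun x : ℝ × ℝ => |x.1 - x.2| ^ r)
      ((volume.restrict (Ioc a b)).prod (volume.restrict (Ioc a b))) := by
  -- a convolution kernel, once `|u| ^ r` is cut off outside the possible differences `x.1 - x.2`
  set g := (uIcc (a - b) (b - a)).indicator fun u : ℝ => |u| ^ r
  have hg : Integrable g volume :=
    (integrable_indicator_iff measurableSet_uIcc).2 <|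
      (intervalIntegrable_iff').1 (intervalIntegrable_abs_rpow hr _ _)
  have hconv := ((integrable_const (1 : ℝ) (μ := volume.restrict (Ioc a b))).convolution_integrand
    (ContinuousLinearMap.mul ℝ ℝ) hg).restrict (s := Ioc a b ×ˢ univ)
  rw [← Measure.prod_restrict, Measure.restrict_univ] at hconv
  refine hconv.congr ?_
  have hmem : ∀ᵐ u ∂volume.restrict (Ioc a b), u ∈ Ioc a b := ae_restrict_mem measurableSet_Ioc
  filter_upwards [Measure.ae_prod_of_ae hmem hmem] with x ⟨⟨h₁, h₁'⟩, h₂, h₂'⟩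
  have : x.1 - x.2 ∈ uIcc (a - b) (b - a) := mem_uIcc.2 (Or.inl ⟨by linarith, by linarith⟩)
  simp [g, this]

theorem integrable_mul_rpow_prod {s : ℝ} (hs : -1 < s) (T : ℝ) :
    Integrable (fun x : ℝ × ℝ => (x.1 * x.2) ^ s)
      ((volume.restrict (Ioc 0 T)).prod (volume.restrict (Ioc 0 T))) := by
  have h : Integrable (fun u : ℝ => u ^ s) (volume.restrict (Ioc 0 T)) :=
    (intervalIntegral.intervalIntegrable_rpow' hs).def'.mono_set Ioc_subset_uIoc
  have hmem : ∀ᵐ u ∂volume.restrict (Ioc 0 T), u ∈ Ioc 0 T := ae_restrict_mem measurableSet_Ioc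
  refine (h.mul_prod h).congr ?_
  filter_upwards [Measure.ae_prod_of_ae hmem hmem] with x ⟨h₁, h₂⟩
  exact (Real.mul_rpow h₁.1.le h₂.1.le).symm

section Pairs

variable {μ : Measure ℝ} [SFinite μ]

theorem ae_abs_mul_le_of_forall_abs_le {φ ψ : ℝ → ℝ → ℝ} {s : Set ℝ} {M : ℝ}
    (hμ : ∀ᵐ u ∂μ, u ∈ s) (hφ : ∀ t ∈ s, ∀ u ∈ s, |φ t u| ≤ M)
    (hψ : ∀ t ∈ s, ∀ u ∈ s, |ψ t u| ≤ M) :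
    ∀ᵐ p ∂(μ.prod μ).prod (μ.prod μ), |φ p.1.1 p.2.1 * ψ p.1.2 p.2.2| ≤ M * M := by
  filter_upwards [Measure.ae_prod_of_ae (Measure.ae_prod_of_ae hμ hμ)
    (Measure.ae_prod_of_ae hμ hμ)] with p ⟨⟨h₁, h₂⟩, h₃, h₄⟩
  have hφp := hφ _ h₁ _ h₃
  rw [abs_mul]
  exact mul_le_mul hφp (hψ _ h₂ _ h₄) (abs_nonneg _) ((abs_nonneg _).trans hφp)

theorem integral_abs_mul_abs_sub_rpow_mul_rpow_eq {φ ψ : ℝ → ℝ → ℝ} {r s : ℝ}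
    (hμ : ∀ᵐ u ∂μ, 0 ≤ u)
    (h : Integrable (fun p : (ℝ × ℝ) × ℝ × ℝ =>
      |φ p.1.1 p.2.1 * ψ p.1.2 p.2.2| * |p.1.1 - p.1.2| ^ r * (p.2.1 * p.2.2) ^ s)
      ((μ.prod μ).prod (μ.prod μ))) :
    ∫ p, |φ p.1.1 p.2.1 * ψ p.1.2 p.2.2| * |p.1.1 - p.1.2| ^ r * (p.2.1 * p.2.2) ^ s
        ∂(μ.prod μ).prod (μ.prod μ)
      = ∫ r₁, ∫ r₂, (∫ u, |φ r₁ u| * u ^ s ∂μ) * (∫ u, |ψ r₂ u| * u ^ s ∂μ)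
          * |r₁ - r₂| ^ r ∂μ ∂μ := by
  have split : (fun p : (ℝ × ℝ) × ℝ × ℝ =>
        |φ p.1.1 p.2.1 * ψ p.1.2 p.2.2| * |p.1.1 - p.1.2| ^ r * (p.2.1 * p.2.2) ^ s)
      =ᵐ[(μ.prod μ).prod (μ.prod μ)] fun p =>
        |φ p.1.1 p.2.1| * p.2.1 ^ s * (|ψ p.1.2 p.2.2| * p.2.2 ^ s) * |p.1.1 - p.1.2| ^ r := by
    filter_upwards [Measure.quasiMeasurePreserving_snd.ae (Measure.ae_prod_of_ae hμ hμ)]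
      with p ⟨h₁, h₂⟩
    rw [abs_mul, Real.mul_rpow h₁ h₂]
    ring
  rw [integral_congr_ae split, integral_mul_mul_prod_eq_integral_integral
    (f := fun t u => |φ t u| * u ^ s) (g := fun t u => |ψ t u| * u ^ s)
    (k := fun x => |x.1 - x.2| ^ r) (h.congr split)]

end Pairs

theorem inner_H_tensor2_sub_inner_H1_tensor2_le_general
    (β : ℝ) (hβ : β ∈ Set.Ioo (1/2 : ℝ) 1)
    (Cβ Cβ' : ℝ) (hCβ : 0 < Cβ)
    (D : ℝ → ℝ → ℝ) (hD : Measurable (Function.uncurry D))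
    (hDbound : ∀ t s : ℝ, 0 < t → 0 < s → t ≠ s →
      |D t s - Cβ * |t - s| ^ (2 * β - 2)| ≤ Cβ' * (t * s) ^ (β - 1))
    (T : ℝ) (hT : 0 < T)
    (φ ψ : ℝ → ℝ → ℝ)
    (hφ : Measurable (Function.uncurry φ)) (hψ : Measurable (Function.uncurry ψ))
    (hφsymm : ∀ t s : ℝ, φ t s = φ s t) (hψsymm : ∀ t s : ℝ, ψ t s = ψ s t)
    (M : ℝ) (hφM : ∀ t ∈ Set.Icc (0 : ℝ) T, ∀ s ∈ Set.Icc (0 : ℝ) T, |φ t s| ≤ M)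
    (hψM : ∀ t ∈ Set.Icc (0 : ℝ) T, ∀ s ∈ Set.Icc (0 : ℝ) T, |ψ t s| ≤ M) :
    |(∫ t₁ in (0:ℝ)..T, ∫ s₁ in (0:ℝ)..T, ∫ t₂ in (0:ℝ)..T, ∫ s₂ in (0:ℝ)..T,
        φ t₁ s₁ * ψ t₂ s₂ * D t₁ t₂ * D s₁ s₂)
      - Cβ ^ 2 * ∫ t₁ in (0:ℝ)..T, ∫ s₁ in (0:ℝ)..T, ∫ t₂ in (0:ℝ)..T, ∫ s₂ in (0:ℝ)..T,
        φ t₁ s₁ * ψ t₂ s₂ * |t₁ - t₂| ^ (2 * β - 2) * |s₁ - s₂| ^ (2 * β - 2)|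
    ≤ Cβ' ^ 2 * (∫ t₁ in (0:ℝ)..T, ∫ s₁ in (0:ℝ)..T, ∫ t₂ in (0:ℝ)..T, ∫ s₂ in (0:ℝ)..T,
        |φ t₁ s₁ * ψ t₂ s₂| * (t₁ * t₂) ^ (β - 1) * (s₁ * s₂) ^ (β - 1))
      + 2 * Cβ' * |Cβ * ∫ r₁ in (0:ℝ)..T, ∫ r₂ in (0:ℝ)..T,
          (∫ u in (0:ℝ)..T, |φ r₁ u| * u ^ (β - 1)) * (∫ u in (0:ℝ)..T, |ψ r₂ u| * u ^ (β - 1))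
            * |r₁ - r₂| ^ (2 * β - 2)| := by
  obtain ⟨hβ_gt, -⟩ := hβ
  simp only [intervalIntegral.integral_of_le hT.le]
  set μ := volume.restrict (Ioc (0 : ℝ) T)
  have hμ : ∀ᵐ u ∂μ, u ∈ Ioc 0 T := ae_restrict_mem measurableSet_Ioc
  have hK := integrable_abs_sub_rpow_prod (r := 2 * β - 2) (by linarith) 0 T
  have hP := integrable_mul_rpow_prod (s := β - 1) (by linarith) T
  have hDK : ∀ᵐ x ∂μ.prod μ,
      |Function.uncurry D x - Cβ * |x.1 - x.2| ^ (2 * β - 2)| ≤ Cβ' * (x.1 * x.2) ^ (β - 1) := by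
    filter_upwards [Measure.ae_prod_of_ae hμ hμ, Measure.ae_prod_ne μ μ] with x ⟨h₁, h₂⟩ hne
    exact hDbound x.1 x.2 h₁.1 h₂.1 hne
  have hDint := integrable_of_abs_sub_le hD.aestronglyMeasurable (hK.const_mul Cβ)
    (hP.const_mul Cβ') hDK
  set Φ : (ℝ × ℝ) × ℝ × ℝ → ℝ := fun p => φ p.1.1 p.2.1 * ψ p.1.2 p.2.2
  have hΦ : AEStronglyMeasurable Φ ((μ.prod μ).prod (μ.prod μ)) :=
    ((hφ.comp (measurable_fst.fst.prodMk measurable_snd.fst)).mul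
      (hψ.comp (measurable_fst.snd.prodMk measurable_snd.snd))).aestronglyMeasurable
  have hΦM := ae_abs_mul_le_of_forall_abs_le (hμ.mono fun _ h => Ioc_subset_Icc_self h) hφM hψM
  have hΦsymm : ∀ x y, Φ (x, y) = Φ (y, x) := fun x y => by
    simp only [Φ, hφsymm x.1 y.1, hψsymm x.2 y.2]
  rw [integral_integral_integral_integral_eq (hDint.bdd_mul_mul_prod hDint hΦ hΦM),
    integral_integral_integral_integral_eq (hK.bdd_mul_mul_prod hK hΦ hΦM),
    integral_integral_integral_integral_eq (hP.bdd_abs_mul_mul_prod hP hΦ hΦM)]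
  refine (abs_integral_mul_mul_prod_sub_le hΦ hΦM hΦsymm hDint hK hP (fun _ => by positivity)
    hCβ.le hDK).trans_eq ?_
  have hKχ (χ : ℝ → ℝ → ℝ) (r : ℝ) : 0 ≤ ∫ u, |χ r u| * u ^ (β - 1) ∂μ :=
    setIntegral_nonneg measurableSet_Ioc fun u hu => by have := hu.1; positivity
  rw [integral_abs_mul_abs_sub_rpow_mul_rpow_eq (hμ.mono fun _ h => h.1.le)
      (hK.bdd_abs_mul_mul_prod hP hΦ hΦM),
    abs_of_nonneg (mul_nonneg hCβ.le (integral_nonneg fun r₁ => integral_nonneg fun r₂ =>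
      mul_nonneg (mul_nonneg (hKχ φ r₁) (hKχ ψ r₂)) (by positivity)))]

/-- Proposition 2.3, third inequality:
`|⟨φ,ψ⟩_{H^{⊗2}} − ⟨φ,ψ⟩_{H₁^{⊗2}}| ≤ ⟨φ,ψ⟩_{H₂^{⊗2}} + 2 C'_β |⟨Kφ, Kψ⟩_{H₁}|`. -/
theorem inner_H_tensor2_sub_inner_H1_tensor2_le
    (β : ℝ) (hβ : β ∈ Set.Ioo (1/2 : ℝ) 1)
    (Cβ Cβ' : ℝ) (hCβ : 0 < Cβ) (hCβ' : 0 ≤ Cβ')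
    (D : ℝ → ℝ → ℝ) (hD : Measurable (Function.uncurry D))
    (hDbound : ∀ t s : ℝ, 0 < t → 0 < s → t ≠ s →
      |D t s - Cβ * |t - s| ^ (2 * β - 2)| ≤ Cβ' * (t * s) ^ (β - 1))
    (T : ℝ) (hT : 0 < T)
    (φ ψ : ℝ → ℝ → ℝ)
    (hφ : Measurable (Function.uncurry φ)) (hψ : Measurable (Function.uncurry ψ))
    (hφsymm : ∀ t s : ℝ, φ t s = φ s t) (hψsymm : ∀ t s : ℝ, ψ t s = ψ s t)
    (M : ℝ) (hφM : ∀ t ∈ Set.Icc (0 : ℝ) T, ∀ s ∈ Set.Icc (0 : ℝ) T, |φ t s| ≤ M)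
    (hψM : ∀ t ∈ Set.Icc (0 : ℝ) T, ∀ s ∈ Set.Icc (0 : ℝ) T, |ψ t s| ≤ M) :
    |(∫ t₁ in (0:ℝ)..T, ∫ s₁ in (0:ℝ)..T, ∫ t₂ in (0:ℝ)..T, ∫ s₂ in (0:ℝ)..T,
        φ t₁ s₁ * ψ t₂ s₂ * D t₁ t₂ * D s₁ s₂)
      - Cβ ^ 2 * ∫ t₁ in (0:ℝ)..T, ∫ s₁ in (0:ℝ)..T, ∫ t₂ in (0:ℝ)..T, ∫ s₂ in (0:ℝ)..T,
        φ t₁ s₁ * ψ t₂ s₂ * |t₁ - t₂| ^ (2 * β - 2) * |s₁ - s₂| ^ (2 * β - 2)|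
    ≤ Cβ' ^ 2 * (∫ t₁ in (0:ℝ)..T, ∫ s₁ in (0:ℝ)..T, ∫ t₂ in (0:ℝ)..T, ∫ s₂ in (0:ℝ)..T,
        |φ t₁ s₁ * ψ t₂ s₂| * (t₁ * t₂) ^ (β - 1) * (s₁ * s₂) ^ (β - 1))
      + 2 * Cβ' * |Cβ * ∫ r₁ in (0:ℝ)..T, ∫ r₂ in (0:ℝ)..T,
          (∫ u in (0:ℝ)..T, |φ r₁ u| * u ^ (β - 1)) * (∫ u in (0:ℝ)..T, |ψ r₂ u| * u ^ (β - 1))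
            * |r₁ - r₂| ^ (2 * β - 2)| :=
  inner_H_tensor2_sub_inner_H1_tensor2_le_general β hβ Cβ Cβ' hCβ D hD hDbound T hT φ ψ hφ hψ hφsymm
    hψsymm M hφM hψM
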